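/- For every integer n ≥ 2, the random vector (Z11^n/n, Z12^n/n, Z22^n/n) has the same joint distribution as the random vector (B_n, A_n, C_n); consequently, the empirical correlation θ_n = Z12^n/√(Z11^n·Z22^n) has the same distribution as A_n/√(B_n·C_n). -/

import Mathlib

open MeasureTheory ProbabilityTheory Finset

noncomputable section


/-- A standard Brownian motion (Wiener process) on a probability space: it starts at `0`,
has almost surely continuous paths, Gaussian increments `W_t − W_s ~ N(0, t−s)`,
and independent increments over any increasing sequence of times. -/
structure IsBrownian {Ω : Type*} [MeasurableSpace Ω] (μ : Measure Ω)
    (W : Ω → ℝ → ℝ) : Prop where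
  meas : ∀ t : ℝ, Measurable fun ω => W ω t
  zero : ∀ᵐ ω ∂μ, W ω 0 = 0
  cont : ∀ᵐ ω ∂μ, Continuous (W ω)
  gauss_incr : ∀ s t : ℝ, 0 ≤ s → s ≤ t →
    Measure.map (fun ω => W ω t - W ω s) μ = gaussianReal 0 (Real.toNNReal (t - s))
  indep_incr : ∀ (k : ℕ) (t : ℕ → ℝ), Monotone t → (∀ i, 0 ≤ t i) →
    iIndepFun
      (fun i : Fin k => fun ω => W ω (t (i.1 + 1)) - W ω (t i.1)) μ

/-- The kernel `M(s,t) = min(s,t) − s·t`. -/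
def Mker (s t : ℝ) : ℝ := min s t - s * t

/-- The discrete bilinear form
`Σ_{j,k=1}^n M((j−1)/n, (k−1)/n) (W(j/n) − W((j−1)/n)) (V(k/n) − V((k−1)/n))`. -/
def quadForm {Ω : Type*} (W V : Ω → ℝ → ℝ) (n : ℕ) (ω : Ω) : ℝ :=
  ∑ j ∈ Finset.Icc 1 n, ∑ k ∈ Finset.Icc 1 n,
    Mker (((j : ℝ) - 1) / n) (((k : ℝ) - 1) / n)
      * (W ω ((j : ℝ) / n) - W ω (((j : ℝ) - 1) / n))
      * (V ω ((k : ℝ) / n) - V ω (((k : ℝ) - 1) / n))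

/-- The continuous covariance-type functional
`∫₀¹ W(t) V(t) dt − (∫₀¹ W(t) dt)(∫₀¹ V(t) dt)`. -/
def covLim {Ω : Type*} (W V : Ω → ℝ → ℝ) (ω : Ω) : ℝ :=
  (∫ t in (0 : ℝ)..1, W ω t * V ω t)
    - (∫ t in (0 : ℝ)..1, W ω t) * (∫ t in (0 : ℝ)..1, V ω t)

/-- Partial sum `x_1 + ⋯ + x_i`. -/
def psum (x : ℕ → ℝ) (i : ℕ) : ℝ := ∑ j ∈ Finset.Icc 1 i, x j

/-- The empirical covariance of the partial-sum sequences of `x` and `y` built from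
their first `n` terms: `(1/n) Σ S_i T_i − (1/n²) (Σ S_i)(Σ T_i)`. -/
def Zbil (n : ℕ) (x y : ℕ → ℝ) : ℝ :=
  (1 / (n : ℝ)) * ∑ i ∈ Finset.Icc 1 n, psum x i * psum y i
    - (1 / (n : ℝ) ^ 2) * (∑ i ∈ Finset.Icc 1 n, psum x i) *
        (∑ i ∈ Finset.Icc 1 n, psum y i)

/-- The empirical correlation `θ_n` of the two random walks. -/
def thetaN {Ω : Type*} (X Y : ℕ → Ω → ℝ) (n : ℕ) (ω : Ω) : ℝ :=
  Zbil n (fun i => X i ω) (fun i => Y i ω) /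
    Real.sqrt (Zbil n (fun i => X i ω) (fun i => X i ω) *
      Zbil n (fun i => Y i ω) (fun i => Y i ω))

variable {Ω Ω' : Type*} [MeasurableSpace Ω] [MeasurableSpace Ω']

/-!
Reindexing the partial sums gives `Z^n(x, y) / n = Σ_{j,k<n} M(j/n, k/n) (x_{j+1}/√n) (y_{k+1}/√n)`,
while `B_n, A_n, C_n` are the same bilinear form evaluated at the Brownian increments
over the grid `j/n`. Both pairs of input vectors consist of two independent vectors of
i.i.d. `N(0, 1/n)` coordinates, so the two triples are images of the same law under one
continuous map, and so are the correlations.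
-/

open scoped NNReal

def mkerForm (n : ℕ) (a b : Fin n → ℝ) : ℝ :=
  ∑ j : Fin n, ∑ k : Fin n, Mker (j / n) (k / n) * a j * b k

def mkerGram (n : ℕ) (p : (Fin n → ℝ) × (Fin n → ℝ)) : ℝ × ℝ × ℝ :=
  (mkerForm n p.1 p.1, mkerForm n p.1 p.2, mkerForm n p.2 p.2)

def scaledSteps (n : ℕ) (x : ℕ → ℝ) (i : Fin n) : ℝ := x (i + 1) / √n

def gridIncrements (n : ℕ) (w : ℝ → ℝ) (i : Fin n) : ℝ :=
  w ((i + 1 : ℕ) / n) - w ((i : ℕ) / n)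

def gridGaussian (n : ℕ) : Measure (Fin n → ℝ) :=
  Measure.pi fun _ => gaussianReal 0 (n : ℝ≥0)⁻¹

def corr (p : ℝ × ℝ × ℝ) : ℝ := p.2.1 / √(p.1 * p.2.2)

lemma sum_Icc_one_eq_sum_fin {M : Type*} [AddCommMonoid M] (n : ℕ) (f : ℕ → M) :
    ∑ j ∈ Icc 1 n, f j = ∑ j : Fin n, f (j + 1) := by
  rw [Fin.sum_univ_eq_sum_range (fun j => f (j + 1)), range_eq_Ico, sum_Ico_add']
  rfl

lemma sum_Icc_ite_lt {R : Type*} [NonAssocSemiring R] (n m : ℕ) (a : R) :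
    ∑ i ∈ Icc 1 n, (if m < i then a else 0) = ((n - m : ℕ) : R) * a := by
  rw [← sum_filter, sum_const, nsmul_eq_mul, ← Nat.card_Ioc m n]
  congr 3
  ext i
  simp only [mem_filter, mem_Icc, mem_Ioc]
  omega

lemma psum_eq_sum_range (x : ℕ → ℝ) (i : ℕ) : psum x i = ∑ j ∈ range i, x (j + 1) := by
  induction i with
  | zero => simp [psum]
  | succ i ih => rw [psum, sum_Icc_succ_top (by omega), ← psum, ih, sum_range_succ]

lemma psum_eq_sum_fin_ite (x : ℕ → ℝ) {i n : ℕ} (hi : i ≤ n) :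
    psum x i = ∑ j : Fin n, if (j : ℕ) < i then x (j + 1) else 0 := by
  rw [Fin.sum_univ_eq_sum_range (fun j => if j < i then x (j + 1) else 0), ← sum_filter,
    psum_eq_sum_range]
  congr 1
  ext j
  simp only [mem_range, mem_filter]
  omega

lemma sum_psum (n : ℕ) (x : ℕ → ℝ) :
    ∑ i ∈ Icc 1 n, psum x i = ∑ j : Fin n, ((n - j : ℕ) : ℝ) * x (j + 1) := by
  calc ∑ i ∈ Icc 1 n, psum x i
      = ∑ i ∈ Icc 1 n, ∑ j : Fin n, if (j : ℕ) < i then x (j + 1) else 0 :=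
        sum_congr rfl fun i hi => psum_eq_sum_fin_ite x (mem_Icc.1 hi).2
    _ = _ := by simp only [sum_comm (s := Icc 1 n), sum_Icc_ite_lt]

lemma sum_psum_mul_psum (n : ℕ) (x y : ℕ → ℝ) :
    ∑ i ∈ Icc 1 n, psum x i * psum y i =
      ∑ j : Fin n, ∑ k : Fin n, ((n - max (j : ℕ) k : ℕ) : ℝ) * (x (j + 1) * y (k + 1)) := by
  calc ∑ i ∈ Icc 1 n, psum x i * psum y i
      = ∑ i ∈ Icc 1 n, ∑ j : Fin n, ∑ k : Fin n,
          if max (j : ℕ) k < i then x (j + 1) * y (k + 1) else 0 := by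
        refine sum_congr rfl fun i hi => ?_
        rw [psum_eq_sum_fin_ite x (mem_Icc.1 hi).2, psum_eq_sum_fin_ite y (mem_Icc.1 hi).2,
          sum_mul_sum]
        simp only [ite_zero_mul_ite_zero, max_lt_iff]
    _ = ∑ j : Fin n, ∑ k : Fin n, ∑ i ∈ Icc 1 n,
          if max (j : ℕ) k < i then x (j + 1) * y (k + 1) else 0 := by
        rw [sum_comm]
        exact sum_congr rfl fun _ _ => sum_comm
    _ = _ := by simp only [sum_Icc_ite_lt]

lemma Zbil_div_eq_mkerForm (n : ℕ) (x y : ℕ → ℝ) :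
    Zbil n x y / n = mkerForm n (scaledSteps n x) (scaledSteps n y) := by
  rcases n.eq_zero_or_pos with rfl | hn
  · simp [mkerForm]
  rw [Zbil, sum_psum_mul_psum, sum_psum, sum_psum, mul_assoc, sum_mul_sum, mul_sum, mul_sum,
    sub_div, sum_div, sum_div, ← sum_sub_distrib, mkerForm]
  refine sum_congr rfl fun j _ => ?_
  rw [mul_sum, mul_sum, sum_div, sum_div, ← sum_sub_distrib]
  refine sum_congr rfl fun k _ => ?_
  have hs : (√n : ℝ) ^ 2 = n := Real.sq_sqrt n.cast_nonneg
  have hn' : (0 : ℝ) < n := Nat.cast_pos.2 hn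
  rw [scaledSteps, scaledSteps, Mker, Nat.cast_sub (max_le j.2.le k.2.le), Nat.cast_sub j.2.le,
    Nat.cast_sub k.2.le, min_div_div_right hn'.le, Nat.cast_max]
  -- `(n - max j k) / n² - (n - j)(n - k) / n³ = (min j k / n - j k / n²) / n`
  rcases le_total (j : ℝ) k with h | h <;>
    simp only [h, max_eq_left, max_eq_right, min_eq_left, min_eq_right] <;>
    field_simp <;> rw [hs] <;> ring

lemma quadForm_eq_mkerForm {α : Type*} (W V : α → ℝ → ℝ) (n : ℕ) (ω : α) :
    quadForm W V n ω = mkerForm n (gridIncrements n (W ω)) (gridIncrements n (V ω)) := by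
  simp only [quadForm, sum_Icc_one_eq_sum_fin, mkerForm, gridIncrements]
  push_cast
  simp only [add_sub_cancel_right]

lemma continuous_mkerGram (n : ℕ) : Continuous (mkerGram n) := by
  unfold mkerGram mkerForm
  fun_prop

lemma measurable_gridIncrements (n : ℕ) : Measurable (gridIncrements n) :=
  measurable_pi_lambda _ fun _ => (measurable_pi_apply _).sub (measurable_pi_apply _)

lemma IsBrownian.hasLaw_gridIncrements {μ : Measure Ω} {W : Ω → ℝ → ℝ} (hW : IsBrownian μ W)
    (n : ℕ) : HasLaw (fun ω => gridIncrements n (W ω)) (gridGaussian n) μ := by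
  have hmono : Monotone fun m : ℕ => (m : ℝ) / n := fun _ _ hab =>
    div_le_div_of_nonneg_right (Nat.cast_le.2 hab) n.cast_nonneg
  refine (hW.indep_incr n _ hmono fun m => by positivity).hasLaw_pi fun i => ⟨?_, ?_⟩
  · exact ((hW.meas _).sub (hW.meas _)).aemeasurable
  · refine (hW.gauss_incr _ _ (by positivity) (hmono (Nat.le_succ i))).trans ?_
    congr
    ext
    simp [← sub_div]

lemma hasLaw_gridIncrements_prod {μ : Measure Ω} [IsFiniteMeasure μ] {W V : Ω → ℝ → ℝ}
    (hW : IsBrownian μ W) (hV : IsBrownian μ V) (hWV : IndepFun W V μ) (n : ℕ) :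
    HasLaw (fun ω => (gridIncrements n (W ω), gridIncrements n (V ω)))
      ((gridGaussian n).prod (gridGaussian n)) μ :=
  (hWV.comp (measurable_gridIncrements n) (measurable_gridIncrements n)).hasLaw_prod
    (hW.hasLaw_gridIncrements n) (hV.hasLaw_gridIncrements n)

lemma hasLaw_div_sqrt_natCast {μ : Measure Ω'} {Z : Ω' → ℝ}
    (hZ : μ.map Z = gaussianReal 0 1) (n : ℕ) :
    HasLaw (fun ω => Z ω / √n) (gaussianReal 0 (n : ℝ≥0)⁻¹) μ := by
  have hZlaw : HasLaw Z (gaussianReal 0 1) μ := ⟨.of_map_ne_zero (by simp [hZ, NeZero.ne]), hZ⟩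
  convert gaussianReal_div_const hZlaw √n using 2
  · simp
  · ext
    simp

lemma hasLaw_scaledSteps_prod {μ : Measure Ω'} {X Y : ℕ → Ω' → ℝ}
    (hXY : iIndepFun (Sum.elim X Y) μ)
    (hX : ∀ i, μ.map (X i) = gaussianReal 0 1) (hY : ∀ i, μ.map (Y i) = gaussianReal 0 1)
    (n : ℕ) :
    HasLaw (fun ω => (scaledSteps n (X · ω), scaledSteps n (Y · ω)))
      ((gridGaussian n).prod (gridGaussian n)) μ := by
  let succ : Fin n → ℕ := fun i => i + 1
  have hsucc : Function.Injective succ := fun a b h => Fin.ext (Nat.succ_injective h)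
  have hindep : iIndepFun (fun s ω => Sum.elim X Y (Sum.map succ succ s) ω / √n) μ :=
    (hXY.precomp (Sum.map_injective.2 ⟨hsucc, hsucc⟩)).comp _ fun _ => measurable_div_const _
  have hlaw : HasLaw (fun ω s => Sum.elim X Y (Sum.map succ succ s) ω / √n)
      (Measure.pi fun _ => gaussianReal 0 (n : ℝ≥0)⁻¹) μ :=
    hindep.hasLaw_pi fun s => match s with
      | .inl i => hasLaw_div_sqrt_natCast (hX (succ i)) n
      | .inr i => hasLaw_div_sqrt_natCast (hY (succ i)) n
  exact (measurePreserving_sumPiEquivProdPi _).comp_hasLaw hlaw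

lemma measurable_corr : Measurable corr := by
  unfold corr
  fun_prop

lemma corr_div_const {c : ℝ} (hc : 0 < c) (a b d : ℝ) :
    corr (a / c, b / c, d / c) = corr (a, b, d) := by
  have had : a / c * (d / c) = a * d / c ^ 2 := by ring
  simp only [corr, had, Real.sqrt_div' _ (sq_nonneg c), Real.sqrt_sq hc.le]
  rw [div_div_div_cancel_right₀ hc.ne']

lemma thetaN_eq_corr {α : Type*} (X Y : ℕ → α → ℝ) (n : ℕ) (ω : α) :
    thetaN X Y n ω = corr (Zbil n (X · ω) (X · ω) / n, Zbil n (X · ω) (Y · ω) / n,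
      Zbil n (Y · ω) (Y · ω) / n) := by
  rcases n.eq_zero_or_pos with rfl | hn
  · simp [thetaN, Zbil, corr]
  · exact (corr_div_const (Nat.cast_pos.2 hn) _ _ _).symm

theorem triple_eq_in_distribution_general (μ' : Measure Ω') (X Y : ℕ → Ω' → ℝ)
    (hXYindep : iIndepFun (Sum.elim X Y) μ')
    (hX : ∀ i, Measure.map (X i) μ' = gaussianReal 0 1)
    (hY : ∀ i, Measure.map (Y i) μ' = gaussianReal 0 1)
    (μ : Measure Ω) [IsProbabilityMeasure μ]
    (W1 W2 : Ω → ℝ → ℝ) (hW1 : IsBrownian μ W1) (hW2 : IsBrownian μ W2)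
    (hWindep : IndepFun W1 W2 μ)
    (n : ℕ) :
    Measure.map (fun ω =>
        ((Zbil n (fun i => X i ω) (fun i => X i ω) / n,
          Zbil n (fun i => X i ω) (fun i => Y i ω) / n,
          Zbil n (fun i => Y i ω) (fun i => Y i ω) / n) : ℝ × ℝ × ℝ)) μ'
      = Measure.map (fun ω =>
          ((quadForm W1 W1 n ω, quadForm W1 W2 n ω, quadForm W2 W2 n ω) : ℝ × ℝ × ℝ)) μ
    ∧ Measure.map (thetaN X Y n) μ'
        = Measure.map (fun ω => quadForm W1 W2 n ω /
            Real.sqrt (quadForm W1 W1 n ω * quadForm W2 W2 n ω)) μ := by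
  have hsteps := (hasLaw_scaledSteps_prod hXYindep hX hY n).identDistrib
    (hasLaw_gridIncrements_prod hW1 hW2 hWindep n)
  have hgram : IdentDistrib
      (fun ω => (Zbil n (X · ω) (X · ω) / n, Zbil n (X · ω) (Y · ω) / n,
        Zbil n (Y · ω) (Y · ω) / n))
      (fun ω => (quadForm W1 W1 n ω, quadForm W1 W2 n ω, quadForm W2 W2 n ω)) μ' μ := by
    convert hsteps.comp (continuous_mkerGram n).measurable using 1 <;> ext ω <;>
      simp only [Function.comp_apply, mkerGram, Zbil_div_eq_mkerForm, quadForm_eq_mkerForm]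
  refine ⟨hgram.map_eq, ?_⟩
  convert (hgram.comp measurable_corr).map_eq using 2
  · exact funext (thetaN_eq_corr X Y n)
  · rfl

/-- `(Z11^n/n, Z12^n/n, Z22^n/n)` has the same joint law as `(B_n, A_n, C_n)`, and
consequently `θ_n` has the same law as `A_n/√(B_n C_n)`. -/
theorem triple_eq_in_distribution (μ' : Measure Ω') [IsProbabilityMeasure μ'] (X Y : ℕ → Ω' → ℝ)
    (hXm : ∀ i, Measurable (X i)) (hYm : ∀ i, Measurable (Y i))
    (hXYindep : iIndepFun (Sum.elim X Y) μ')
    (hX : ∀ i, Measure.map (X i) μ' = gaussianReal 0 1)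
    (hY : ∀ i, Measure.map (Y i) μ' = gaussianReal 0 1)
    (μ : Measure Ω) [IsProbabilityMeasure μ]
    (W1 W2 : Ω → ℝ → ℝ) (hW1 : IsBrownian μ W1) (hW2 : IsBrownian μ W2)
    (hWindep : IndepFun W1 W2 μ)
    (n : ℕ) (hn : 2 ≤ n) :
    Measure.map (fun ω =>
        ((Zbil n (fun i => X i ω) (fun i => X i ω) / n,
          Zbil n (fun i => X i ω) (fun i => Y i ω) / n,
          Zbil n (fun i => Y i ω) (fun i => Y i ω) / n) : ℝ × ℝ × ℝ)) μ'
      = Measure.map (fun ω =>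
          ((quadForm W1 W1 n ω, quadForm W1 W2 n ω, quadForm W2 W2 n ω) : ℝ × ℝ × ℝ)) μ
    ∧ Measure.map (thetaN X Y n) μ'
        = Measure.map (fun ω => quadForm W1 W2 n ω /
            Real.sqrt (quadForm W1 W1 n ω * quadForm W2 W2 n ω)) μ :=
  triple_eq_in_distribution_general μ' X Y hXYindep hX hY μ W1 W2 hW1 hW2 hWindep n
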